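/- Let B be a category admitting equalisers, G = (G, δ, ε) a comonad on a category A, and F : B → A a left G-comodule functor with right adjoint R, lifted functor F̄ : B → A^G with right adjoint R̄, and comonad morphism t : FR → G. Suppose that for every object b ∈ B the component t_{F(b)} is an isomorphism. Then the restrictions F̄' : Inj(F, B) → Inj(U^G, A^G) and R̄' : Inj(U^G, A^G) → Inj(F, B) form an adjunction F̄' ⊣ R̄' whose unit is an isomorphism; hence Inj(F, B) is (isomorphic to) a coreflective subcategory of Inj(U^G, A^G). -/

import Mathlib

/-!
For an adjunction `L ⊣ R`, the `L`-injective objects are exactly the retracts of objects `R c`: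
`L η_b` is split by the counit, so injectivity of `b` splits `η_b`. Thus an `F`-injective `b` is a
retract of `R F b`, and `F̄ (R F b) ≅ φ^G (F b)` through `t`; a `U^G`-injective `X` is a retract of
`φ^G X`, and `R̄ φ^G` is right adjoint to `U^G F̄ = F`. Invertibility of a unit component passes to
retracts, and at `R a` the unit of `F̄ ⊣ R̄` followed by `R̄ t_a` is the canonical isomorphism
between the two right adjoints `R` and `R̄ φ^G` of `F`.
-/

open CategoryTheory CategoryTheory.Limits

namespace Paper

variable {A : Type*} [Category A] {B : Type*} [Category B]

/-- A left `G`-comodule structure `β : F ⟶ GF` on a functor `F : B ⥤ A`. -/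
structure ComoduleStruct (G : Comonad A) (F : B ⥤ A) where
  β : F ⟶ F ⋙ (G : A ⥤ A)
  counit : ∀ b : B, β.app b ≫ G.ε.app (F.obj b) = 𝟙 (F.obj b)
  coassoc : ∀ b : B, β.app b ≫ G.δ.app (F.obj b) = β.app b ≫ (G : A ⥤ A).map (β.app b)

/-- The lifting `F̄ : B ⥤ A^G` of a `G`-comodule functor `(F, β)`, satisfying `U^G ∘ F̄ = F`. -/
@[simps]
def ComoduleStruct.lift {G : Comonad A} {F : B ⥤ A} (c : ComoduleStruct G F) :
    B ⥤ G.Coalgebra where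
  obj b :=
    { A := F.obj b
      a := c.β.app b
      counit := c.counit b
      coassoc := c.coassoc b }
  map f :=
    { f := F.map f
      h := (c.β.naturality f).symm }

/-- The comonad morphism `t = Gσ ∘ βR : FR ⟶ G` associated with a `G`-comodule functor `F`
with right adjoint `R` (counit `σ`). -/
def ComoduleStruct.galoisHom {G : Comonad A} {F : B ⥤ A} (c : ComoduleStruct G F)
    (R : A ⥤ B) (adj : F ⊣ R) : R ⋙ F ⟶ (G : A ⥤ A) :=
  Functor.whiskerLeft R c.β ≫ Functor.whiskerRight adj.counit (G : A ⥤ A) ≫ (Functor.leftUnitor _).hom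

/-- An object `b` is `F`-injective if any morphism out of `b₁` which becomes a split
monomorphism under `F` allows extension of morphisms `b₁ ⟶ b`. -/
def FInjective (F : B ⥤ A) (b : B) : Prop :=
  ∀ ⦃b₁ b₂ : B⦄ (f : b₁ ⟶ b₂) (g : b₁ ⟶ b), IsSplitMono (F.map f) → ∃ h : b₂ ⟶ b, f ≫ h = g

theorem FInjective.of_retract {C : Type*} [Category C] {L : B ⥤ C} {x y : B} (h : Retract x y)
    (hy : FInjective L y) : FInjective L x := by
  intro b₁ b₂ f g hf
  obtain ⟨k, hk⟩ := hy f (g ≫ h.i) hf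
  exact ⟨k ≫ h.r, by simp [reassoc_of% hk]⟩

theorem fInjective_rightAdjoint_obj {C : Type*} [Category C] {L : B ⥤ C} {R : C ⥤ B}
    (adj : L ⊣ R) (c : C) : FInjective L (R.obj c) := by
  intro b₁ b₂ f g hf
  refine ⟨adj.homEquiv b₂ c (retraction (L.map f) ≫ (adj.homEquiv b₁ c).symm g), ?_⟩
  rw [← adj.homEquiv_naturality_left, IsSplitMono.id_assoc, Equiv.apply_symm_apply]

noncomputable def retractUnitOfFInjective {C : Type*} [Category C] {L : B ⥤ C} {R : C ⥤ B}
    (adj : L ⊣ R) {b : B} (hb : FInjective L b) : Retract b (R.obj (L.obj b)) :=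
  have hsplit : IsSplitMono (L.map (adj.unit.app b)) :=
    ⟨⟨⟨adj.counit.app (L.obj b), adj.left_triangle_components b⟩⟩⟩
  { i := adj.unit.app b
    r := Classical.choose (hb (adj.unit.app b) (𝟙 b) hsplit)
    retract := Classical.choose_spec (hb (adj.unit.app b) (𝟙 b) hsplit) }

theorem _root_.CategoryTheory.Adjunction.rightAdjointUniq_hom_app_eq_unit_app_comp_map
    {C D : Type*} [Category C] [Category D] {L : C ⥤ D} {R R' : D ⥤ C} (adj₁ : L ⊣ R)
    (adj₂ : L ⊣ R') (d : D) :
    (adj₁.rightAdjointUniq adj₂).hom.app d =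
      adj₂.unit.app (R.obj d) ≫ R'.map (adj₁.counit.app d) := by
  simp [Adjunction.rightAdjointUniq]

section Restrict

variable {C D : Type*} [Category C] [Category D] {L : C ⥤ D} {R : D ⥤ C} (adj : L ⊣ R)
  {P : ObjectProperty C} {Q : ObjectProperty D}
  (hL : ∀ X, P X → Q (L.obj X)) (hR : ∀ Y, Q Y → P (R.obj Y))

noncomputable def _root_.CategoryTheory.Adjunction.restrictFullSubcategory :
    Q.lift (P.ι ⋙ L) (fun X => hL X.obj X.property) ⊣
      P.lift (Q.ι ⋙ R) (fun Y => hR Y.obj Y.property) :=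
  adj.restrictFullyFaithful P.fullyFaithfulι Q.fullyFaithfulι (Iso.refl _) (Iso.refl _)

theorem _root_.CategoryTheory.Adjunction.restrictFullSubcategory_unit_app_hom
    (X : P.FullSubcategory) :
    ((adj.restrictFullSubcategory hL hR).unit.app X).hom = adj.unit.app X.obj :=
  (adj.map_restrictFullyFaithful_unit_app P.fullyFaithfulι Q.fullyFaithfulι
    (L := Q.lift (P.ι ⋙ L) (fun X => hL X.obj X.property))
    (R := P.lift (Q.ι ⋙ R) (fun Y => hR Y.obj Y.property)) (Iso.refl _) (Iso.refl _) X).trans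
    (by simp)

end Restrict

namespace ComoduleStruct

variable {G : Comonad A} {F : B ⥤ A} (c : ComoduleStruct G F)

/-- `t_a` as a morphism of coalgebras `F̄ (R a) ⟶ φ^G a`, namely the transpose of `σ_a` along
`U^G ⊣ φ^G`. -/
def galoisCoalgHom (R : A ⥤ B) (adj : F ⊣ R) (a : A) : c.lift.obj (R.obj a) ⟶ G.cofree.obj a :=
  G.adj.unit.app (c.lift.obj (R.obj a)) ≫ G.cofree.map (adj.counit.app a)

theorem galoisCoalgHom_f (R : A ⥤ B) (adj : F ⊣ R) (a : A) :
    (c.galoisCoalgHom R adj a).f = (c.galoisHom R adj).app a := by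
  simp only [galoisCoalgHom, Functor.comp_obj, Comonad.adj_unit, lift_obj_a, galoisHom,
    NatTrans.comp_app, Functor.whiskerLeft_app, Functor.id_obj, Functor.whiskerRight_app,
    Functor.leftUnitor_hom_app, Category.comp_id]
  rfl

theorem unit_app_comp_map_galoisCoalgHom (R : A ⥤ B) (adj : F ⊣ R) {Rbar : G.Coalgebra ⥤ B}
    (adj' : c.lift ⊣ Rbar) (a : A) :
    adj'.unit.app (R.obj a) ≫ Rbar.map (c.galoisCoalgHom R adj a) =
      (adj.rightAdjointUniq (adj'.comp G.adj)).hom.app a := by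
  refine Eq.trans ?_
    (Adjunction.rightAdjointUniq_hom_app_eq_unit_app_comp_map adj (adj'.comp G.adj) a).symm
  rw [Adjunction.comp_unit_app, galoisCoalgHom, Functor.map_comp]
  exact (Category.assoc _ _ _).symm

variable {R : A ⥤ B} {adj : F ⊣ R} (ht : ∀ b : B, IsIso ((c.galoisHom R adj).app (F.obj b)))
include ht

theorem isIso_galoisCoalgHom (b : B) : IsIso (c.galoisCoalgHom R adj (F.obj b)) :=
  have : IsIso (c.galoisCoalgHom R adj (F.obj b)).f := by rw [galoisCoalgHom_f]; exact ht b
  Comonad.coalgebra_iso_of_iso G _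

theorem fInjective_lift_obj {b : B} (hb : FInjective F b) :
    FInjective G.forget (c.lift.obj b) :=
  have := c.isIso_galoisCoalgHom ht b
  FInjective.of_retract (((retractUnitOfFInjective adj hb).map c.lift).trans
      (asIso (c.galoisCoalgHom R adj (F.obj b))).retract)
    (fInjective_rightAdjoint_obj G.adj (F.obj b))

theorem isIso_unit_app_of_fInjective {Rbar : G.Coalgebra ⥤ B} (adj' : c.lift ⊣ Rbar) {b : B}
    (hb : FInjective F b) : IsIso (adj'.unit.app b) := by
  have := c.isIso_galoisCoalgHom ht b
  have hRFb : IsIso (adj'.unit.app (R.obj (F.obj b))) := by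
    have : IsIso
        (adj'.unit.app (R.obj (F.obj b)) ≫ Rbar.map (c.galoisCoalgHom R adj (F.obj b))) := by
      rw [c.unit_app_comp_map_galoisCoalgHom R adj adj' (F.obj b)]
      infer_instance
    exact IsIso.of_isIso_comp_right _ (Rbar.map (c.galoisCoalgHom R adj (F.obj b)))
  exact MorphismProperty.of_retract (P := .isomorphisms B)
    (NatTrans.retractArrowApp adj'.unit (retractUnitOfFInjective adj hb)) hRFb

end ComoduleStruct

theorem fInjective_obj_of_fInjective_forget {G : Comonad A} {F : B ⥤ A} {c : ComoduleStruct G F}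
    {Rbar : G.Coalgebra ⥤ B} (adj' : c.lift ⊣ Rbar) {X : G.Coalgebra}
    (hX : FInjective G.forget X) : FInjective F (Rbar.obj X) :=
  FInjective.of_retract ((retractUnitOfFInjective G.adj hX).map Rbar)
    (fInjective_rightAdjoint_obj (adj'.comp G.adj) X.A)

theorem statement5_general (G : Comonad A) (F : B ⥤ A) (R : A ⥤ B)
    (adj : F ⊣ R) (c : ComoduleStruct G F)
    (Rbar : G.Coalgebra ⥤ B) (adj' : c.lift ⊣ Rbar)
    (ht : ∀ b : B, IsIso ((c.galoisHom R adj).app (F.obj b))) :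
    ∃ (hF : ∀ b : B, FInjective F b → FInjective G.forget (c.lift.obj b))
      (hR : ∀ X : G.Coalgebra, FInjective G.forget X → FInjective F (Rbar.obj X))
      (adj'' : ObjectProperty.lift (FInjective G.forget)
            (ObjectProperty.ι (FInjective F) ⋙ c.lift)
            (fun X => hF X.obj X.property) ⊣
          ObjectProperty.lift (FInjective F)
            (ObjectProperty.ι (FInjective G.forget) ⋙ Rbar)
            (fun X => hR X.obj X.property)),
      IsIso adj''.unit ∧
        ∀ b : ObjectProperty.FullSubcategory (FInjective F), (adj''.unit.app b).hom = adj'.unit.app b.obj := by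
  let hF b (hb : FInjective F b) := c.fInjective_lift_obj ht hb
  let hR X (hX : FInjective G.forget X) := fInjective_obj_of_fInjective_forget adj' hX
  refine ⟨hF, hR, adj'.restrictFullSubcategory hF hR, ?_,
    adj'.restrictFullSubcategory_unit_app_hom hF hR⟩
  have (b : ObjectProperty.FullSubcategory (FInjective F)) :
      IsIso ((adj'.restrictFullSubcategory hF hR).unit.app b) := by
    rw [← ObjectProperty.isIso_hom_iff, Adjunction.restrictFullSubcategory_unit_app_hom]
    exact c.isIso_unit_app_of_fInjective ht adj' b.property
  exact NatIso.isIso_of_isIso_app _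

/-- **Proposition 1.9.**  Let `B` admit equalisers, `G` a comonad on `A`, `F : B ⥤ A` a
left `G`-comodule functor with right adjoint `R`, lifted functor `F̄` with right adjoint
`R̄`, and comonad morphism `t : FR ⟶ G`.  If `t_{F(b)}` is an isomorphism for every `b`,
then `F̄` and `R̄` restrict to functors `F̄' : Inj(F,B) ⥤ Inj(U^G,A^G)` and
`R̄' : Inj(U^G,A^G) ⥤ Inj(F,B)` forming an adjunction `F̄' ⊣ R̄'` whose unit is an
isomorphism; hence `Inj(F, B)` is (isomorphic to) a coreflective subcategory of
`Inj(U^G, A^G)`. -/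
theorem statement5 [HasEqualizers B] (G : Comonad A) (F : B ⥤ A) (R : A ⥤ B)
    (adj : F ⊣ R) (c : ComoduleStruct G F)
    (Rbar : G.Coalgebra ⥤ B) (adj' : c.lift ⊣ Rbar)
    (ht : ∀ b : B, IsIso ((c.galoisHom R adj).app (F.obj b))) :
    ∃ (hF : ∀ b : B, FInjective F b → FInjective G.forget (c.lift.obj b))
      (hR : ∀ X : G.Coalgebra, FInjective G.forget X → FInjective F (Rbar.obj X))
      (adj'' : ObjectProperty.lift (FInjective G.forget)
            (ObjectProperty.ι (FInjective F) ⋙ c.lift)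
            (fun X => hF X.obj X.property) ⊣
          ObjectProperty.lift (FInjective F)
            (ObjectProperty.ι (FInjective G.forget) ⋙ Rbar)
            (fun X => hR X.obj X.property)),
      IsIso adj''.unit ∧
        ∀ b : ObjectProperty.FullSubcategory (FInjective F), (adj''.unit.app b).hom = adj'.unit.app b.obj :=
  statement5_general G F R adj c Rbar adj' ht

end Paper
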